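/- Let α ∈ [−1, 0] and set ω_n = (n+1)^α for n ≥ 0. Then ω_1 ≥ 1/2, and ω_n(ω_{n−1} + ω_{n+1}) ≤ 2 ω_{n−1} ω_{n+1} for every integer n ≥ 1. Consequently the shift operator M_z on D_α satisfies Shimorin's inequality ‖f + z g‖_α² ≤ 2(‖z f‖_α² + ‖g‖_α²) for all f, g ∈ D_α. -/

import Mathlib

open MeasureTheory

/-- The measure on `ℕ` giving the singleton `{n}` mass `(n+1)^α`. -/
noncomputable def dirichletMeasure (α : ℝ) : Measure ℕ :=
  Measure.count.withDensity (fun n => ENNReal.ofReal ((n + 1 : ℝ) ^ α))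

attribute [irreducible] dirichletMeasure

/-- The Dirichlet-type space `D_α`, realized as the weighted `ℓ²` space of Taylor
coefficients: `‖f‖_α² = ∑ |a_n|² (n+1)^α`.  `α = -1` is the Bergman space `A²`,
`α = 0` is the Hardy space `H²`. -/
noncomputable abbrev Dspace (α : ℝ) : Type := Lp ℂ 2 (dirichletMeasure α)

/-- `T` acts on `D_α` as multiplication by `z^k`, i.e. as the `k`-step coefficient shift. -/
def IsShiftBy (α : ℝ) (k : ℕ) (T : Dspace α →L[ℂ] Dspace α) : Prop :=
  ∀ f : Dspace α, ∀ n : ℕ, (T f : ℕ → ℂ) n = if k ≤ n then (f : ℕ → ℂ) (n - k) else 0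

/-! Write `ωₙ = (n+1)^α`, and `aₙ`, `bₙ` for the coefficients of `f`, `g`. The `n`-th coefficient of
`f + z g` is `aₙ + bₙ₋₁`, so Shimorin's inequality follows term by term: for `n = 0` from
`ω₀ ≤ 2ω₁`, and for `n ≥ 1` from `ωₙ |a + b|² ≤ 2ωₙ₊₁ |a|² + 2ωₙ₋₁ |b|²`, a weighted
Cauchy–Schwarz inequality valid as soon as `ωₙ(ωₙ₋₁ + ωₙ₊₁) ≤ 2ωₙ₋₁ωₙ₊₁`. Dividing by
`ωₙ₋₁ωₙωₙ₊₁`, the latter is midpoint concavity of `x ↦ x^(-α)`, which holds for `-α ∈ [0, 1]`. -/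

open scoped ENNReal

theorem two_inv_le_two_rpow {α : ℝ} (hα : -1 ≤ α) : (2 : ℝ)⁻¹ ≤ 2 ^ α := by
  simpa [Real.rpow_neg_one] using Real.rpow_le_rpow_of_exponent_le one_le_two hα

theorem rpow_midpoint_mul_add_le {α a b : ℝ} (hα : α ∈ Set.Icc (-1 : ℝ) 0) (ha : 0 < a)
    (hb : 0 < b) : ((a + b) / 2) ^ α * (a ^ α + b ^ α) ≤ 2 * a ^ α * b ^ α := by
  set m := (a + b) / 2
  have hm : 0 < m := by positivity
  have hconc : a ^ (-α) + b ^ (-α) ≤ 2 * m ^ (-α) := by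
    have := (Real.concaveOn_rpow (p := -α) (by linarith [hα.2]) (by linarith [hα.1])).2 ha.le hb.le
      (by norm_num : (0 : ℝ) ≤ 1 / 2) (by norm_num : (0 : ℝ) ≤ 1 / 2) (by norm_num)
    simp only [smul_eq_mul, show 1 / 2 * a + 1 / 2 * b = m by ring] at this
    linarith
  have hsum : a ^ α + b ^ α = a ^ α * b ^ α * (a ^ (-α) + b ^ (-α)) := by
    rw [Real.rpow_neg ha.le, Real.rpow_neg hb.le]
    field_simp [(Real.rpow_pos_of_pos ha α).ne', (Real.rpow_pos_of_pos hb α).ne']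
    ring
  have hm_inv : m ^ α * m ^ (-α) = 1 := by
    rw [Real.rpow_neg hm.le, mul_inv_cancel₀ (Real.rpow_pos_of_pos hm α).ne']
  calc m ^ α * (a ^ α + b ^ α) = a ^ α * b ^ α * (m ^ α * (a ^ (-α) + b ^ (-α))) := by
        rw [hsum]; ring
    _ ≤ a ^ α * b ^ α * (m ^ α * (2 * m ^ (-α))) := by
        have := (Real.rpow_pos_of_pos hm α).le
        gcongr
    _ = 2 * a ^ α * b ^ α := by
        linear_combination 2 * a ^ α * b ^ α * hm_inv

section WeightedShift

variable {E : Type*} [SeminormedAddCommGroup E]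

theorem norm_add_sq_mul_le {p q r : ℝ} (hq : 0 ≤ q) (hpr : 0 < p + r)
    (h : q * (p + r) ≤ 2 * p * r) (a b : E) :
    ‖a + b‖ ^ 2 * q ≤ 2 * (‖a‖ ^ 2 * r) + 2 * (‖b‖ ^ 2 * p) := by
  have htri : ‖a + b‖ ^ 2 ≤ (‖a‖ + ‖b‖) ^ 2 :=
    pow_le_pow_left₀ (norm_nonneg _) (norm_add_le a b) 2
  refine le_of_mul_le_mul_left ?_ hpr
  calc (p + r) * (‖a + b‖ ^ 2 * q) ≤ q * (p + r) * (‖a‖ + ‖b‖) ^ 2 := by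
        nlinarith [mul_nonneg hq hpr.le]
    _ ≤ 2 * p * r * (‖a‖ + ‖b‖) ^ 2 := by gcongr
    _ ≤ (p + r) * (2 * (‖a‖ ^ 2 * r) + 2 * (‖b‖ ^ 2 * p)) := by
        -- `(p + r) (r x² + p y²) - p r (x + y)² = (r x - p y)²`
        nlinarith [sq_nonneg (r * ‖a‖ - p * ‖b‖)]

theorem enorm_sq_mul_ofReal (x : E) (w : ℝ) :
    ‖x‖ₑ ^ 2 * ENNReal.ofReal w = ENNReal.ofReal (‖x‖ ^ 2 * w) := by
  rw [ENNReal.ofReal_mul (by positivity), ENNReal.ofReal_pow (norm_nonneg x), ofReal_norm]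

theorem tsum_enorm_add_shift_sq_le {ω : ℕ → ℝ} (hω : ∀ n, 0 < ω n) (h₀ : ω 0 ≤ 2 * ω 1)
    (h : ∀ n, ω (n + 1) * (ω n + ω (n + 2)) ≤ 2 * ω n * ω (n + 2)) (a b : ℕ → E) :
    ∑' n, ‖a n + (if 1 ≤ n then b (n - 1) else 0)‖ₑ ^ 2 * ENNReal.ofReal (ω n) ≤
      2 * (∑' n, ‖a n‖ₑ ^ 2 * ENNReal.ofReal (ω (n + 1)) +
        ∑' n, ‖b n‖ₑ ^ 2 * ENNReal.ofReal (ω n)) := by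
  have two_mul_ofReal (x : ℝ) : 2 * ENNReal.ofReal x = ENNReal.ofReal (2 * x) := by
    rw [ENNReal.ofReal_mul zero_le_two, ENNReal.ofReal_ofNat]
  have hzero : ‖a 0‖ₑ ^ 2 * ENNReal.ofReal (ω 0) ≤ 2 * (‖a 0‖ₑ ^ 2 * ENNReal.ofReal (ω 1)) := by
    rw [enorm_sq_mul_ofReal, enorm_sq_mul_ofReal, two_mul_ofReal]
    exact ENNReal.ofReal_le_ofReal (by nlinarith [sq_nonneg ‖a 0‖])
  have hsucc (n : ℕ) : ‖a (n + 1) + b n‖ₑ ^ 2 * ENNReal.ofReal (ω (n + 1)) ≤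
      2 * (‖a (n + 1)‖ₑ ^ 2 * ENNReal.ofReal (ω (n + 2))) +
        2 * (‖b n‖ₑ ^ 2 * ENNReal.ofReal (ω n)) := by
    simp only [enorm_sq_mul_ofReal, two_mul_ofReal]
    rw [← ENNReal.ofReal_add (by positivity [(hω (n + 2)).le]) (by positivity [(hω n).le])]
    exact ENNReal.ofReal_le_ofReal <| norm_add_sq_mul_le (hω (n + 1)).le
      (add_pos (hω n) (hω (n + 2))) (h n) _ _
  conv_lhs => rw [tsum_eq_zero_add' ENNReal.summable]
  conv_rhs => rw [tsum_eq_zero_add' ENNReal.summable]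
  simp only [Nat.le_zero, one_ne_zero, ↓reduceIte, add_zero, zero_add, le_add_iff_nonneg_left,
    zero_le, Nat.add_sub_cancel]
  calc _ ≤ 2 * (‖a 0‖ₑ ^ 2 * ENNReal.ofReal (ω 1)) +
        ∑' n, (2 * (‖a (n + 1)‖ₑ ^ 2 * ENNReal.ofReal (ω (n + 2))) +
          2 * (‖b n‖ₑ ^ 2 * ENNReal.ofReal (ω n))) :=
        add_le_add hzero (ENNReal.tsum_le_tsum hsucc)
    _ = _ := by rw [ENNReal.tsum_add, ENNReal.tsum_mul_left, ENNReal.tsum_mul_left]; ring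

end WeightedShift

noncomputable def dirichletWeight (α : ℝ) (n : ℕ) : ℝ := ((n : ℝ) + 1) ^ α

theorem dirichletWeight_pos (α : ℝ) (n : ℕ) : 0 < dirichletWeight α n :=
  Real.rpow_pos_of_pos (by positivity) α

theorem dirichletWeight_zero_le_two_mul {α : ℝ} (hα : -1 ≤ α) :
    dirichletWeight α 0 ≤ 2 * dirichletWeight α 1 := by
  have := two_inv_le_two_rpow hα
  simp only [dirichletWeight, Nat.cast_zero, zero_add, Real.one_rpow, Nat.cast_one,
    one_add_one_eq_two]
  linarith

theorem dirichletWeight_succ_mul_add_le {α : ℝ} (hα : α ∈ Set.Icc (-1 : ℝ) 0) (n : ℕ) :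
    dirichletWeight α (n + 1) * (dirichletWeight α n + dirichletWeight α (n + 2)) ≤
      2 * dirichletWeight α n * dirichletWeight α (n + 2) := by
  have := rpow_midpoint_mul_add_le hα (a := (n : ℝ) + 1) (b := (n : ℝ) + 3) (by positivity)
    (by positivity)
  have hmid : ((n : ℝ) + 1 + ((n : ℝ) + 3)) / 2 = (n : ℝ) + 2 := by ring
  have h1 : ((n + 1 : ℕ) : ℝ) + 1 = (n : ℝ) + 2 := by push_cast; ring
  have h2 : ((n + 2 : ℕ) : ℝ) + 1 = (n : ℝ) + 3 := by push_cast; ring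
  simpa only [dirichletWeight, h1, h2, hmid] using this

theorem lintegral_dirichletMeasure (α : ℝ) (F : ℕ → ℝ≥0∞) :
    ∫⁻ n, F n ∂dirichletMeasure α = ∑' n, F n * ENNReal.ofReal (dirichletWeight α n) := by
  rw [dirichletMeasure, lintegral_withDensity_eq_lintegral_mul _ (by fun_prop) (by fun_prop),
    lintegral_count]
  simp only [Pi.mul_apply, mul_comm, dirichletWeight]

theorem ae_dirichletMeasure_iff {α : ℝ} {p : ℕ → Prop} :
    (∀ᵐ n ∂dirichletMeasure α, p n) ↔ ∀ n, p n := by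
  rw [dirichletMeasure, ae_withDensity_iff (by fun_prop), Measure.ae_count_iff]
  simp only [ne_eq, ENNReal.ofReal_eq_zero, not_le, Real.rpow_pos_of_pos (Nat.cast_add_one_pos _),
    true_imp_iff]

namespace Dspace

variable {α : ℝ}

theorem coeFn_add (f g : Dspace α) : ⇑(f + g) = ⇑f + ⇑g :=
  funext <| ae_dirichletMeasure_iff.1 (Lp.coeFn_add f g)

theorem enorm_sq_eq_tsum (f : Dspace α) :
    ‖f‖ₑ ^ 2 = ∑' n, ‖f n‖ₑ ^ 2 * ENNReal.ofReal (dirichletWeight α n) := by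
  rw [Lp.enorm_def, ← lintegral_dirichletMeasure]
  have := eLpNorm_nnreal_pow_eq_lintegral (f := ⇑f) (μ := dirichletMeasure α) (p := 2) two_ne_zero
  simpa using this

theorem enorm_sq_eq_tsum_of_isShiftBy {T : Dspace α →L[ℂ] Dspace α} (hT : IsShiftBy α 1 T)
    (f : Dspace α) :
    ‖T f‖ₑ ^ 2 = ∑' n, ‖f n‖ₑ ^ 2 * ENNReal.ofReal (dirichletWeight α (n + 1)) := by
  rw [enorm_sq_eq_tsum, tsum_eq_zero_add' ENNReal.summable]
  simp [hT f]

theorem norm_add_shift_sq_le (hα : α ∈ Set.Icc (-1 : ℝ) 0) {T : Dspace α →L[ℂ] Dspace α}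
    (hT : IsShiftBy α 1 T) (f g : Dspace α) :
    ‖f + T g‖ ^ 2 ≤ 2 * (‖T f‖ ^ 2 + ‖g‖ ^ 2) := by
  have h : ‖f + T g‖ₑ ^ 2 ≤ 2 * (‖T f‖ₑ ^ 2 + ‖g‖ₑ ^ 2) := by
    rw [enorm_sq_eq_tsum, enorm_sq_eq_tsum_of_isShiftBy hT, enorm_sq_eq_tsum g, coeFn_add]
    simp only [Pi.add_apply, hT g]
    exact tsum_enorm_add_shift_sq_le (dirichletWeight_pos α) (dirichletWeight_zero_le_two_mul hα.1)
      (dirichletWeight_succ_mul_add_le hα) _ _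
  simpa [ENNReal.toReal_add, ENNReal.toReal_mul, ENNReal.toReal_pow, toReal_enorm]
    using ENNReal.toReal_mono (by finiteness) h

end Dspace

/-- For `α ∈ [-1,0]` and `ωₙ = (n+1)^α`: `ω₁ ≥ 1/2`, `ωₙ(ω_{n-1}+ω_{n+1}) ≤ 2ω_{n-1}ω_{n+1}`
for `n ≥ 1`, and consequently the shift `M_z` on `D_α` satisfies Shimorin's inequality
`‖f + zg‖² ≤ 2(‖zf‖² + ‖g‖²)`. -/
theorem shift_satisfies_shimorin
    (α : ℝ) (hα : α ∈ Set.Icc (-1 : ℝ) 0) :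
    (1 / 2 ≤ ((1 : ℝ) + 1) ^ α) ∧
    (∀ n : ℕ, 1 ≤ n →
      ((n : ℝ) + 1) ^ α * ((n : ℝ) ^ α + ((n : ℝ) + 2) ^ α) ≤
        2 * (n : ℝ) ^ α * ((n : ℝ) + 2) ^ α) ∧
    (∀ T : Dspace α →L[ℂ] Dspace α, IsShiftBy α 1 T →
      ∀ f g : Dspace α, ‖f + T g‖ ^ 2 ≤ 2 * (‖T f‖ ^ 2 + ‖g‖ ^ 2)) := by
  refine ⟨?_, fun n hn => ?_, fun T hT f g => Dspace.norm_add_shift_sq_le hα hT f g⟩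
  · rw [one_div, one_add_one_eq_two]
    exact two_inv_le_two_rpow hα.1
  · have := rpow_midpoint_mul_add_le hα (a := n) (b := n + 2) (Nat.cast_pos.2 hn) (by positivity)
    rwa [show ((n : ℝ) + (n + 2)) / 2 = n + 1 by ring] at this
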